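/- arXiv:2306.08437 — 3 statements merged into one kernel-verified Lean document; each statement's English description precedes it below -/
import Mathlib

section
/- Let Ω ⊆ ℂ be open and f : Ω → ℂ a continuous function of class C¹ satisfying the asymptotic mean value formula f(z) = (1/|D_r(z)|) ∫_{D_r(z)} f(ζ)[1 + (2/r)(ζ − z)] dA_ζ + o(r) as r → 0⁺ at every z ∈ Ω. Then f is holomorphic in Ω. -/
/-! At `z`, write `f (z + w) = f z + a * w + b * conj w + o(‖w‖)`, where
`b = (L 1 + I * L I) / 2` is `∂f/∂z̄` for the real derivative `L`. Against the weight
`1 + 2 w / r`, the disc means of `w`, `w ^ 2` and `conj w` vanish by rotation invariance, and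
`conj w * w = ‖w‖ ^ 2` has mean `r ^ 2 / 2`. So the weighted mean is `f z + r * b + o(r)`, and
the hypothesis forces `b = 0`, which is the Cauchy–Riemann equation. -/

open MeasureTheory Metric

open Complex ComplexConjugate Filter Set Topology Asymptotics Real

theorem ContinuousOn.integrableOn_ball {X E : Type*} [PseudoMetricSpace X] [ProperSpace X]
    [MeasurableSpace X] [OpensMeasurableSpace X] {μ : Measure X} [IsFiniteMeasureOnCompacts μ]
    [NormedAddCommGroup E] {g : X → E} {x : X} {r : ℝ} (hg : ContinuousOn g (closedBall x r)) :
    IntegrableOn g (ball x r) μ :=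
  hg.integrableOn_of_subset_isCompact (isCompact_closedBall x r) measurableSet_ball
    ball_subset_closedBall measure_ball_lt_top.ne

variable {E : Type*} [NormedAddCommGroup E] [NormedSpace ℝ E]

theorem setIntegral_ball_comp_sub {G : Type*} [NormedAddCommGroup G] [MeasurableSpace G]
    [BorelSpace G] (μ : Measure G) [μ.IsAddRightInvariant] (x : G) (r : ℝ) (g : G → E) :
    ∫ y in ball x r, g (y - x) ∂μ = ∫ y in ball 0 r, g y ∂μ := by
  have h := (measurePreserving_sub_right μ x).setIntegral_preimage_emb
    (MeasurableEquiv.subRight x).measurableEmbedding g (ball 0 r)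
  rwa [show (· - x) ⁻¹' ball (0 : G) r = ball x r by ext; simp [dist_eq_norm]] at h

theorem Complex.measureReal_ball (a : ℂ) {r : ℝ} (hr : 0 ≤ r) :
    volume.real (ball a r) = π * r ^ 2 := by
  simp [measureReal_def, Complex.volume_ball, ENNReal.toReal_ofReal hr, mul_comm]

theorem setIntegral_ball_zero_comp_circle_mul (a : Circle) (r : ℝ) (g : ℂ → E) :
    ∫ w in ball (0 : ℂ) r, g (a * w) = ∫ w in ball (0 : ℂ) r, g w := by
  have h := (rotation a).measurePreserving.setIntegral_preimage_emb
    (rotation a).toHomeomorph.measurableEmbedding g (ball 0 r)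
  rw [(rotation a).preimage_ball, map_zero] at h
  simpa [rotation_apply] using h

theorem setIntegral_ball_zero_pow (r : ℝ) {n : ℕ} (hn : n ≠ 0) :
    ∫ w in ball (0 : ℂ) r, w ^ n = 0 := by
  have ha : ((Circle.exp (π / n) : ℂ)) ^ n = -1 := by
    rw [← Circle.coe_pow, ← Circle.exp_natCast_mul, mul_div_cancel₀ _ (by exact_mod_cast hn),
      Circle.coe_exp, exp_pi_mul_I]
  have h := setIntegral_ball_zero_comp_circle_mul (Circle.exp (π / n)) r (· ^ n)
  simp only [mul_pow, ha, neg_one_mul, integral_neg] at h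
  linear_combination -h / 2

theorem setIntegral_ball_zero_id (r : ℝ) : ∫ w in ball (0 : ℂ) r, w = 0 := by
  simpa using setIntegral_ball_zero_pow r one_ne_zero

theorem setIntegral_ball_zero_norm_sq {r : ℝ} (hr : 0 ≤ r) :
    ∫ w in ball (0 : ℂ) r, ‖w‖ ^ 2 = π * r ^ 4 / 2 := by
  have key := integral_fun_norm_addHaar (volume : Measure ℂ) ((Iio r).indicator (· ^ 2))
  have h1 : (fun w : ℂ => (Iio r).indicator (· ^ 2) ‖w‖)
      = (ball 0 r).indicator (‖·‖ ^ 2) := by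
    ext w
    by_cases h : ‖w‖ < r <;> simp [Set.indicator, h]
  have h2 : (fun t : ℝ => t ^ (Module.finrank ℝ ℂ - 1) • (Iio r).indicator (· ^ 2) t)
      = (Iio r).indicator (· ^ 3) := by
    ext t
    by_cases h : t < r
    · simp [Set.indicator, h, Complex.finrank_real_complex]; ring
    · simp [Set.indicator, h]
  rw [h1, integral_indicator measurableSet_ball, h2, integral_indicator measurableSet_Iio,
    Measure.restrict_restrict measurableSet_Iio, Iio_inter_Ioi, ← integral_Ioc_eq_integral_Ioo,
    ← intervalIntegral.integral_of_le hr, integral_pow] at key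
  rw [key]
  simp [Complex.finrank_real_complex, Complex.measureReal_ball (0 : ℂ) zero_le_one]
  ring

theorem ContinuousLinearMap.apply_eq_mul_add_mul_conj (L : ℂ →L[ℝ] ℂ) (w : ℂ) :
    L w = (L 1 - I * L I) / 2 * w + (L 1 + I * L I) / 2 * conj w := by
  have hw : L w = w.re • L 1 + w.im • L I := by
    rw [← L.map_smul, ← L.map_smul, ← L.map_add]
    simp
  have hconj : conj w = w.re - w.im * I := by simp [Complex.ext_iff]
  rw [hw, hconj, real_smul, real_smul]
  linear_combination (-(L 1 - I * L I) / 2) * (re_add_im w).symm + (w.im * L I) * I_mul_I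

theorem setIntegral_ball_zero_clm (L : ℂ →L[ℝ] ℂ) (r : ℝ) :
    ∫ w in ball (0 : ℂ) r, L w = 0 := by
  have h := L.integral_comp_comm (μ := volume.restrict (ball 0 r)) (φ := fun w : ℂ => w)
    continuous_id.continuousOn.integrableOn_ball
  simpa [setIntegral_ball_zero_id] using h

theorem setIntegral_ball_zero_clm_mul_self (L : ℂ →L[ℝ] ℂ) {r : ℝ} (hr : 0 ≤ r) :
    ∫ w in ball (0 : ℂ) r, L w * w = (L 1 + I * L I) / 2 * (π * r ^ 4 / 2) := by
  have hsplit : ∀ w : ℂ, L w * w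
      = (L 1 - I * L I) / 2 * w ^ 2 + (L 1 + I * L I) / 2 * ((‖w‖ ^ 2 : ℝ) : ℂ) := by
    intro w
    rw [L.apply_eq_mul_add_mul_conj, ofReal_pow, ← mul_conj']
    ring
  simp_rw [hsplit]
  rw [integral_add, integral_const_mul, integral_const_mul,
    setIntegral_ball_zero_pow r two_ne_zero, integral_complex_ofReal,
    setIntegral_ball_zero_norm_sq hr]
  · push_cast; ring
  all_goals exact ContinuousOn.integrableOn_ball (by fun_prop)

noncomputable def weightedDiskMean (f : ℂ → ℂ) (z : ℂ) (r : ℝ) : ℂ :=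
  (π * r ^ 2)⁻¹ • ∫ ζ in ball z r, f ζ * (1 + (2 / (r : ℂ)) * (ζ - z))

theorem weightedDiskMean_add {g₁ g₂ : ℂ → ℂ} {z : ℂ} {r : ℝ}
    (h₁ : ContinuousOn g₁ (closedBall z r)) (h₂ : ContinuousOn g₂ (closedBall z r)) :
    weightedDiskMean (fun ζ => g₁ ζ + g₂ ζ) z r
      = weightedDiskMean g₁ z r + weightedDiskMean g₂ z r := by
  simp only [weightedDiskMean, add_mul]
  rw [integral_add (ContinuousOn.integrableOn_ball (by fun_prop))
    (ContinuousOn.integrableOn_ball (by fun_prop)), smul_add]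

theorem weightedDiskMean_affine (c : ℂ) (L : ℂ →L[ℝ] ℂ) (z : ℂ) {r : ℝ} (hr : 0 < r) :
    weightedDiskMean (fun ζ => c + L (ζ - z)) z r = c + r * ((L 1 + I * L I) / 2) := by
  have hexpand : ∀ w : ℂ, (c + L w) * (1 + 2 / (r : ℂ) * w)
      = c + (c * (2 / r) * w + (L w + 2 / r * (L w * w))) := fun w => by ring
  rw [weightedDiskMean,
    setIntegral_ball_comp_sub volume z r fun w => (c + L w) * (1 + 2 / (r : ℂ) * w)]
  simp_rw [hexpand]
  rw [integral_add, integral_add, integral_add, setIntegral_const, integral_const_mul,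
    integral_const_mul, setIntegral_ball_zero_id, setIntegral_ball_zero_clm,
    setIntegral_ball_zero_clm_mul_self L hr.le, Complex.measureReal_ball 0 hr.le]
  · have hr' : (r : ℂ) ≠ 0 := ofReal_ne_zero.mpr hr.ne'
    have hπ : (π : ℂ) ≠ 0 := ofReal_ne_zero.mpr pi_ne_zero
    simp only [real_smul, ofReal_inv, ofReal_mul, ofReal_pow]
    field_simp
    ring
  all_goals exact ContinuousOn.integrableOn_ball (by fun_prop)

theorem norm_weightedDiskMean_le {g : ℂ → ℂ} {z : ℂ} {r C : ℝ} (hr : 0 < r)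
    (hg : ∀ ζ ∈ ball z r, ‖g ζ‖ ≤ C) : ‖weightedDiskMean g z r‖ ≤ 3 * C := by
  have hC : 0 ≤ C := (norm_nonneg _).trans (hg z (mem_ball_self hr))
  have hweight : ∀ ζ ∈ ball z r, ‖1 + (2 / (r : ℂ)) * (ζ - z)‖ ≤ 3 := by
    intro ζ hζ
    calc ‖1 + (2 / (r : ℂ)) * (ζ - z)‖ ≤ 1 + 2 / r * ‖ζ - z‖ := by
          refine (norm_add_le _ _).trans ?_
          simp [abs_of_pos hr]
      _ ≤ 1 + 2 / r * r := by gcongr; exact (mem_ball_iff_norm.mp hζ).le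
      _ = 3 := by field_simp; norm_num
  have hint : ‖∫ ζ in ball z r, g ζ * (1 + (2 / (r : ℂ)) * (ζ - z))‖
      ≤ C * 3 * volume.real (ball z r) :=
    norm_setIntegral_le_of_norm_le_const measure_ball_lt_top fun ζ hζ => by
      rw [norm_mul]
      exact mul_le_mul (hg ζ hζ) (hweight ζ hζ) (norm_nonneg _) hC
  rw [Complex.measureReal_ball z hr.le] at hint
  rw [weightedDiskMean, norm_smul, norm_inv, Real.norm_of_nonneg (by positivity)]
  calc (π * r ^ 2)⁻¹ * ‖∫ ζ in ball z r, g ζ * (1 + (2 / (r : ℂ)) * (ζ - z))‖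
      ≤ (π * r ^ 2)⁻¹ * (C * 3 * (π * r ^ 2)) := by gcongr
    _ = 3 * C := by field_simp

theorem tendsto_inv_smul_weightedDiskMean_of_isLittleO {g : ℂ → ℂ} {z : ℂ}
    (hg : g =o[𝓝 z] fun ζ => ζ - z) :
    Tendsto (fun r : ℝ => r⁻¹ • weightedDiskMean g z r) (𝓝[>] 0) (𝓝 0) := by
  rw [← isLittleO_one_iff ℝ]
  refine IsLittleO.of_bound fun c hc => ?_
  obtain ⟨δ, hδ, hgδ⟩ := Metric.eventually_nhds_iff_ball.mp (hg.def (div_pos hc three_pos))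
  filter_upwards [Ioo_mem_nhdsGT hδ] with r ⟨hr, hrδ⟩
  have hbound : ∀ ζ ∈ ball z r, ‖g ζ‖ ≤ c / 3 * r := fun ζ hζ =>
    (hgδ ζ (ball_subset_ball hrδ.le hζ)).trans (by gcongr; exact (mem_ball_iff_norm.mp hζ).le)
  calc ‖r⁻¹ • weightedDiskMean g z r‖ = r⁻¹ * ‖weightedDiskMean g z r‖ := by
        rw [norm_smul, norm_inv, Real.norm_of_nonneg hr.le]
    _ ≤ r⁻¹ * (3 * (c / 3 * r)) := by gcongr; exact norm_weightedDiskMean_le hr hbound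
    _ = c * ‖(1 : ℝ)‖ := by field_simp; simp

theorem HasFDerivAt.tendsto_inv_smul_sub_weightedDiskMean {f : ℂ → ℂ} {L : ℂ →L[ℝ] ℂ}
    {z : ℂ} (hf : HasFDerivAt f L z) (hc : ∀ᶠ ζ in 𝓝 z, ContinuousAt f ζ) :
    Tendsto (fun r : ℝ => r⁻¹ • (f z - weightedDiskMean f z r)) (𝓝[>] 0)
      (𝓝 (-((L 1 + I * L I) / 2))) := by
  set R : ℂ → ℂ := fun ζ => f ζ - f z - L (ζ - z)
  have hR : Tendsto (fun r : ℝ => r⁻¹ • weightedDiskMean R z r) (𝓝[>] 0) (𝓝 0) :=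
    tendsto_inv_smul_weightedDiskMean_of_isLittleO hf.isLittleO
  have hsplit : ∀ᶠ r in 𝓝[>] (0 : ℝ),
      -((L 1 + I * L I) / 2) - r⁻¹ • weightedDiskMean R z r
        = r⁻¹ • (f z - weightedDiskMean f z r) := by
    filter_upwards [self_mem_nhdsWithin, nhdsWithin_le_nhds (eventually_closedBall_subset hc)]
      with r (hr : 0 < r) hball
    have hfc : ContinuousOn f (closedBall z r) := fun ζ hζ => (hball hζ).continuousWithinAt
    have hmean : weightedDiskMean f z r
        = (f z + r * ((L 1 + I * L I) / 2)) + weightedDiskMean R z r := by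
      rw [← weightedDiskMean_affine (f z) L z hr, ← weightedDiskMean_add (by fun_prop)
        (by fun_prop)]
      congr 1
      ext ζ
      simp [R]
    have hr' : (r : ℂ) ≠ 0 := ofReal_ne_zero.mpr hr.ne'
    rw [hmean]
    simp only [Complex.real_smul, ofReal_inv]
    field_simp
    ring
  simpa using (tendsto_const_nhds.sub hR).congr' hsplit

theorem asymptotic_weighted_mvp_implies_holomorphic_general (Ω : Set ℂ) (hΩ : IsOpen Ω) (f : ℂ → ℂ)
    (hf : ContDiffOn ℝ 1 f Ω)
    (hmvp : ∀ z ∈ Ω,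
      Filter.Tendsto
        (fun r : ℝ => r⁻¹ •
          (f z - (Real.pi * r ^ 2)⁻¹ •
            ∫ ζ in ball z r, f ζ * (1 + (2 / (r : ℂ)) * (ζ - z))))
        (nhdsWithin 0 (Set.Ioi 0)) (nhds 0)) :
    DifferentiableOn ℂ f Ω := by
  have hdiff : ∀ z ∈ Ω, DifferentiableAt ℝ f z := fun z hz =>
    (hf.differentiableOn one_ne_zero z hz).differentiableAt (hΩ.mem_nhds hz)
  intro z hz
  have hlim := (hdiff z hz).hasFDerivAt.tendsto_inv_smul_sub_weightedDiskMean
    (eventually_of_mem (hΩ.mem_nhds hz) fun ζ hζ => (hdiff ζ hζ).continuousAt)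
  have hCR : -((fderiv ℝ f z 1 + I * fderiv ℝ f z I) / 2) = 0 :=
    tendsto_nhds_unique hlim (hmvp z hz)
  refine (differentiableAt_complex_iff_differentiableAt_real.2
    ⟨hdiff z hz, ?_⟩).differentiableWithinAt
  rw [smul_eq_mul]
  linear_combination (2 * I) * hCR + fderiv ℝ f z I * I_mul_I

/-- A `C¹` function satisfying the asymptotic weighted mean value formula at every point
of an open set `Ω` is holomorphic in `Ω`. -/
theorem asymptotic_weighted_mvp_implies_holomorphic (Ω : Set ℂ) (hΩ : IsOpen Ω) (f : ℂ → ℂ)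
    (hcont : ContinuousOn f Ω) (hf : ContDiffOn ℝ 1 f Ω)
    (hmvp : ∀ z ∈ Ω,
      Filter.Tendsto
        (fun r : ℝ => r⁻¹ •
          (f z - (Real.pi * r ^ 2)⁻¹ •
            ∫ ζ in ball z r, f ζ * (1 + (2 / (r : ℂ)) * (ζ - z))))
        (nhdsWithin 0 (Set.Ioi 0)) (nhds 0)) :
    DifferentiableOn ℂ f Ω :=
  asymptotic_weighted_mvp_implies_holomorphic_general Ω hΩ f hf hmvp
end

section
/- Let z₁, z₂ ∈ ℂ and r > 0. Then the area of the symmetric difference of the disks D_r(z₁) and D_r(z₂) satisfies |D_r(z₁) △ D_r(z₂)| ≤ 4r·|z₁ − z₂|. -/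
/-!
After a translation and a rotation the centres are `0` and `d * I` with `d = |z₁ - z₂|`. Every
vertical line `re z = x` meets the two disks in open intervals of equal length whose centres
differ by `d`, so it meets their symmetric difference in a set of length at most `2 d`; only the
lines with `|x| ≤ r` meet it at all, and Cavalieri's principle gives the bound `2 d · 2 r`.
-/

open MeasureTheory Metric
open scoped ENNReal

lemma Real.volume_symmDiff_Ioo_le (a b c d : ℝ) :
    volume (symmDiff (Set.Ioo a b) (Set.Ioo c d)) ≤
      ENNReal.ofReal |c - a| + ENNReal.ofReal |d - b| := by
  have hsub : symmDiff (Set.Ioo a b) (Set.Ioo c d) ⊆ Set.uIcc a c ∪ Set.uIcc b d := by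
    intro x hx
    simp only [Set.mem_symmDiff, Set.mem_Ioo, Set.mem_union, Set.mem_uIcc] at hx ⊢
    grind
  calc volume (symmDiff (Set.Ioo a b) (Set.Ioo c d))
      ≤ volume (Set.uIcc a c ∪ Set.uIcc b d) := measure_mono hsub
    _ ≤ ENNReal.ofReal |c - a| + ENNReal.ofReal |d - b| := by
      grw [measure_union_le, Real.volume_interval, Real.volume_interval]

namespace Complex

lemma mk_preimage_ball (c : ℂ) {r : ℝ} (hr : 0 ≤ r) (x : ℝ) :
    mk x ⁻¹' ball c r =
      Set.Ioo (c.im - √(r ^ 2 - (x - c.re) ^ 2)) (c.im + √(r ^ 2 - (x - c.re) ^ 2)) := by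
  ext y
  rw [Set.mem_preimage, mem_ball, dist_eq_re_im, Real.sqrt_lt (by positivity) hr, Set.mem_Ioo,
    sub_lt_comm, ← sub_lt_iff_lt_add', ← abs_sub_lt_iff, Real.lt_sqrt (abs_nonneg _), sq_abs]
  constructor <;> intro h <;> linarith

lemma volume_le_of_forall_re_mem_Icc {s : Set ℂ} (hs : MeasurableSet s) {a b : ℝ} {C : ℝ≥0∞}
    (hre : ∀ z ∈ s, z.re ∈ Set.Icc a b) (hslice : ∀ x, volume (mk x ⁻¹' s) ≤ C) :
    volume s ≤ C * ENNReal.ofReal (b - a) := by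
  rw [← volume_preserving_equiv_real_prod.symm.measure_preimage_equiv, Measure.volume_eq_prod,
    Measure.prod_apply (measurableEquivRealProd.symm.measurableSet_preimage.2 hs),
    ← Real.volume_Icc, ← lintegral_indicator_const measurableSet_Icc]
  refine lintegral_mono fun x ↦ ?_
  by_cases hx : x ∈ Set.Icc a b
  · rw [Set.indicator_of_mem hx]
    exact hslice x
  · have hempty : mk x ⁻¹' s = ∅ :=
      Set.eq_empty_of_forall_notMem fun y hy ↦ hx (hre _ hy)
    change volume (mk x ⁻¹' s) ≤ _
    simp [hempty]

lemma volume_symmDiff_ball_zero_ball_mul_I_le {r : ℝ} (hr : 0 ≤ r) (d : ℝ) :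
    volume (symmDiff (ball 0 r) (ball (d * I) r)) ≤ ENNReal.ofReal (4 * r * |d|) := by
  have hre : ∀ z ∈ symmDiff (ball (0 : ℂ) r) (ball (d * I) r), z.re ∈ Set.Icc (-r) r := by
    intro z hz
    obtain ⟨c, hc, hzc⟩ : ∃ c : ℂ, c.re = 0 ∧ dist z c < r := by
      rcases Set.mem_union _ _ _ |>.1 (Set.symmDiff_subset_union hz) with h | h
      exacts [⟨0, rfl, h⟩, ⟨d * I, by simp, h⟩]
    have hzr : |z.re| < r := by
      simpa [hc] using (abs_re_le_norm (z - c)).trans_lt (dist_eq z c ▸ hzc)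
    exact abs_le.1 hzr.le
  have hslice (x : ℝ) :
      volume (mk x ⁻¹' symmDiff (ball 0 r) (ball (d * I) r)) ≤ ENNReal.ofReal (2 * |d|) := by
    rw [Set.preimage_symmDiff, mk_preimage_ball _ hr, mk_preimage_ball _ hr]
    refine (Real.volume_symmDiff_Ioo_le _ _ _ _).trans_eq ?_
    simp only [zero_re, zero_im, mul_re, mul_im, ofReal_re, ofReal_im, I_re, I_im]
    rw [← ENNReal.ofReal_add (abs_nonneg _) (abs_nonneg _)]
    ring_nf
  calc volume (symmDiff (ball 0 r) (ball (d * I) r))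
      ≤ ENNReal.ofReal (2 * |d|) * ENNReal.ofReal (r - -r) :=
        volume_le_of_forall_re_mem_Icc (measurableSet_ball.symmDiff measurableSet_ball) hre hslice
    _ = ENNReal.ofReal (4 * r * |d|) := by
        rw [← ENNReal.ofReal_mul (by positivity)]
        ring_nf

lemma volume_symmDiff_ball_ball_eq (z₁ z₂ : ℂ) (r : ℝ) :
    volume (symmDiff (ball z₁ r) (ball z₂ r)) =
      volume (symmDiff (ball 0 r) (ball (dist z₁ z₂ * I) r)) := by
  set e : ℂ ≃ₗᵢ[ℝ] ℂ := rotation (Circle.exp (arg (z₂ - z₁) - Real.pi / 2))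
  have he : e (dist z₁ z₂ * I) = z₂ - z₁ := by
    rw [rotation_apply, Circle.coe_exp, dist_comm, dist_eq]
    conv_rhs => rw [← norm_mul_exp_arg_mul_I (z₂ - z₁)]
    push_cast
    rw [sub_mul, exp_sub, div_mul_eq_mul_div, exp_pi_div_two_mul_I]
    field_simp
  have hrot : symmDiff (ball 0 r) (ball (z₂ - z₁) r) =
      e.symm ⁻¹' symmDiff (ball 0 r) (ball (dist z₁ z₂ * I) r) := by
    rw [Set.preimage_symmDiff, e.symm.preimage_ball, e.symm.preimage_ball, e.symm_symm,
      e.map_zero, he]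
  rw [← measure_preimage_add volume z₁, Set.preimage_symmDiff, preimage_add_ball,
    preimage_add_ball, sub_self, hrot, e.symm.measurePreserving.measure_preimage
      (measurableSet_ball.symmDiff measurableSet_ball).nullMeasurableSet]

end Complex

/-- The area of the symmetric difference of two disks of equal radius `r` is at most
`4 r` times the distance between the centers. -/
theorem symmDiff_balls_area_bound (z₁ z₂ : ℂ) (r : ℝ) (hr : 0 < r) :
    volume (symmDiff (ball z₁ r) (ball z₂ r)) ≤ ENNReal.ofReal (4 * r * dist z₁ z₂) := by
  rw [Complex.volume_symmDiff_ball_ball_eq]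
  simpa [abs_of_nonneg dist_nonneg] using
    Complex.volume_symmDiff_ball_zero_ball_mul_I_le hr.le (dist z₁ z₂)
end

section
/- Let ω ∈ ℂ \ {0} and σ, τ ∈ ℂ. For the affine function f_a(ζ) = ω + σ(ζ−z) + τ·conj(ζ−z), let c_∞(f_a, r) be any minimizer over c ∈ ℂ of max_{ζ ∈ ∂D_r(z)} |f_a(ζ) − c·conj(ζ−z)|. Then c_∞(f_a, r) → τ + (ω/conj(ω))·conj(σ) as r → 0⁺. -/
open Metric ComplexConjugate

/-!
Write `ζ - z = v` with `‖v‖ = r` and `L = τ + (ω / conj ω) conj σ`. Expanding,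
`‖ω + σ v + (τ - c) conj v‖² = ‖ω‖² + 2 Re (W_c v) + O(r²)` with
`W_c = conj ω σ + ω conj (τ - c) = ω conj (L - c)`. For `c = L` the first-order term vanishes,
so the sup norm at `L` is at most `√(‖ω‖² + O(r²))`, while for any `c` a suitable `v` makes the
first-order term equal to `2 r ‖ω‖ ‖c - L‖`. Comparing the two at a minimizer gives
`‖c_∞(r) - L‖ = O(r)`.
-/

lemma sq_norm_add_linear_add_antilinear (ω σ b v : ℂ) :
    ‖ω + σ * v + b * conj v‖ ^ 2 =
      ‖ω‖ ^ 2 + 2 * ((conj ω * σ + ω * conj b) * v).re + ‖σ * v + b * conj v‖ ^ 2 := by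
  simp only [Complex.sq_norm, Complex.normSq_apply, Complex.add_re, Complex.add_im,
    Complex.mul_re, Complex.mul_im, Complex.conj_re, Complex.conj_im]
  ring

lemma norm_linear_add_antilinear_le (σ b v : ℂ) :
    ‖σ * v + b * conj v‖ ≤ (‖σ‖ + ‖b‖) * ‖v‖ :=
  calc ‖σ * v + b * conj v‖ ≤ ‖σ * v‖ + ‖b * conj v‖ := norm_add_le _ _
    _ = (‖σ‖ + ‖b‖) * ‖v‖ := by rw [norm_mul, norm_mul, Complex.norm_conj]; ring

lemma exists_norm_eq_and_re_mul_eq (W : ℂ) {r : ℝ} (hr : 0 ≤ r) :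
    ∃ v : ℂ, ‖v‖ = r ∧ (W * v).re = r * ‖W‖ := by
  refine ⟨r * Complex.exp (↑(-W.arg) * Complex.I), ?_, ?_⟩
  · rw [norm_mul, Complex.norm_exp_ofReal_mul_I, Complex.norm_real, Real.norm_of_nonneg hr,
      mul_one]
  · have hrot : W * Complex.exp (↑(-W.arg) * Complex.I) = ‖W‖ := by
      nth_rw 1 [← Complex.norm_mul_exp_arg_mul_I W]
      rw [mul_assoc, ← Complex.exp_add, Complex.ofReal_neg, ← add_mul, add_neg_cancel, zero_mul,
        Complex.exp_zero, mul_one]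
    rw [mul_left_comm, hrot, ← Complex.ofReal_mul, Complex.ofReal_re]

lemma conj_mul_add_mul_conj_sub {ω : ℂ} (hω : ω ≠ 0) (σ τ c : ℂ) :
    conj ω * σ + ω * conj (τ - c) = ω * conj (τ + ω / conj ω * conj σ - c) := by
  have hω' : conj ω ≠ 0 := (map_ne_zero _).mpr hω
  simp only [map_sub, map_add, map_mul, map_div₀, Complex.conj_conj]
  field_simp
  ring

noncomputable def deviation (z ω σ τ c ζ : ℂ) : ℝ :=
  ‖ω + σ * (ζ - z) + τ * conj (ζ - z) - c * conj (ζ - z)‖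

section Deviation

variable (z ω σ τ c : ℂ)

lemma deviation_eq (ζ : ℂ) :
    deviation z ω σ τ c ζ = ‖ω + σ * (ζ - z) + (τ - c) * conj (ζ - z)‖ := by
  rw [deviation]; ring_nf

lemma deviation_le_sSup {r : ℝ} {ζ : ℂ} (hζ : ζ ∈ sphere z r) :
    deviation z ω σ τ c ζ ≤ sSup (deviation z ω σ τ c '' sphere z r) := by
  have hcont : Continuous (deviation z ω σ τ c) := by unfold deviation; fun_prop
  exact le_csSup ((isCompact_sphere z r).image hcont).bddAbove (Set.mem_image_of_mem _ hζ)

variable {ω}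

lemma sq_deviation_limit_le {r : ℝ} {ζ : ℂ} (hω : ω ≠ 0) (hζ : ζ ∈ sphere z r) :
    deviation z ω σ τ (τ + ω / conj ω * conj σ) ζ ^ 2 ≤ ‖ω‖ ^ 2 + (2 * ‖σ‖ * r) ^ 2 := by
  have hv : ‖ζ - z‖ = r := mem_sphere_iff_norm.mp hζ
  have hb : ‖τ - (τ + ω / conj ω * conj σ)‖ = ‖σ‖ := by
    rw [sub_add_cancel_left, norm_neg, norm_mul, norm_div, Complex.norm_conj,
      Complex.norm_conj, div_self (norm_ne_zero_iff.mpr hω), one_mul]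
  have hW := conj_mul_add_mul_conj_sub hω σ τ (τ + ω / conj ω * conj σ)
  rw [sub_self, map_zero, mul_zero] at hW
  have hsecondOrder := norm_linear_add_antilinear_le σ (τ - (τ + ω / conj ω * conj σ)) (ζ - z)
  rw [hb, hv, ← two_mul] at hsecondOrder
  rw [deviation_eq, sq_norm_add_linear_add_antilinear, hW, zero_mul, Complex.zero_re, mul_zero,
    add_zero]
  gcongr

lemma exists_sq_deviation_ge {r : ℝ} (hω : ω ≠ 0) (hr : 0 ≤ r) :
    ∃ ζ ∈ sphere z r,
      ‖ω‖ ^ 2 + 2 * r * (‖ω‖ * ‖c - (τ + ω / conj ω * conj σ)‖) ≤ deviation z ω σ τ c ζ ^ 2 := by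
  obtain ⟨v, hv, hre⟩ := exists_norm_eq_and_re_mul_eq (conj ω * σ + ω * conj (τ - c)) hr
  refine ⟨z + v, by rwa [mem_sphere_iff_norm, add_sub_cancel_left], ?_⟩
  have hW : ‖conj ω * σ + ω * conj (τ - c)‖ = ‖ω‖ * ‖c - (τ + ω / conj ω * conj σ)‖ := by
    rw [conj_mul_add_mul_conj_sub hω, norm_mul, Complex.norm_conj, norm_sub_rev]
  rw [deviation_eq, add_sub_cancel_left, sq_norm_add_linear_add_antilinear, hre, hW]
  nlinarith [sq_nonneg ‖σ * v + (τ - c) * conj v‖]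

lemma norm_sub_limit_le_of_sSup_deviation_le {r : ℝ} (hω : ω ≠ 0) (hr : 0 < r)
    (hc : sSup (deviation z ω σ τ c '' sphere z r)
      ≤ sSup (deviation z ω σ τ (τ + ω / conj ω * conj σ) '' sphere z r)) :
    ‖c - (τ + ω / conj ω * conj σ)‖ ≤ 2 * ‖σ‖ ^ 2 / ‖ω‖ * r := by
  obtain ⟨ζ, hζ, hlow⟩ := exists_sq_deviation_ge z σ τ c hω hr.le
  have hsup : sSup (deviation z ω σ τ (τ + ω / conj ω * conj σ) '' sphere z r)
      ≤ √(‖ω‖ ^ 2 + (2 * ‖σ‖ * r) ^ 2) := by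
    refine Real.sSup_le ?_ (Real.sqrt_nonneg _)
    rintro _ ⟨ξ, hξ, rfl⟩
    exact Real.le_sqrt_of_sq_le (sq_deviation_limit_le z σ τ hω hξ)
  have hup : deviation z ω σ τ c ζ ^ 2 ≤ ‖ω‖ ^ 2 + (2 * ‖σ‖ * r) ^ 2 :=
    (Real.le_sqrt (norm_nonneg _) (by positivity)).mp
      ((deviation_le_sSup z ω σ τ c hζ).trans (hc.trans hsup))
  have hωpos : 0 < ‖ω‖ := norm_pos_iff.mpr hω
  rw [show 2 * ‖σ‖ ^ 2 / ‖ω‖ * r = 2 * ‖σ‖ ^ 2 * r / ‖ω‖ by ring, le_div_iff₀ hωpos]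
  nlinarith

end Deviation

/-- For the affine function `f_a(ζ) = ω + σ(ζ-z) + τ conj(ζ-z)` with `ω ≠ 0`, any minimizer
`c_∞(f_a,r)` of `max_{ζ ∈ ∂D_r(z)} |f_a(ζ) - c conj(ζ-z)|` converges to
`τ + (ω/conj ω) conj σ` as `r → 0⁺`. -/
theorem sup_norm_minimizer_limit (z ω σ τ : ℂ) (hω : ω ≠ 0) (c : ℝ → ℂ)
    (hmin : ∀ r > 0, ∀ c' : ℂ,
      sSup ((fun ζ => ‖
          (ω + σ * (ζ - z) + τ * (starRingEnd ℂ) (ζ - z) - c r * (starRingEnd ℂ) (ζ - z))‖)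
        '' sphere z r)
      ≤ sSup ((fun ζ => ‖
          (ω + σ * (ζ - z) + τ * (starRingEnd ℂ) (ζ - z) - c' * (starRingEnd ℂ) (ζ - z))‖)
        '' sphere z r)) :
    Filter.Tendsto c (nhdsWithin 0 (Set.Ioi 0))
      (nhds (τ + ω / (starRingEnd ℂ) ω * (starRingEnd ℂ) σ)) := by
  rw [tendsto_iff_norm_sub_tendsto_zero]
  have hbound : ∀ r ∈ Set.Ioi (0 : ℝ),
      ‖c r - (τ + ω / conj ω * conj σ)‖ ≤ 2 * ‖σ‖ ^ 2 / ‖ω‖ * r := fun r hr =>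
    norm_sub_limit_le_of_sSup_deviation_le z σ τ (c r) hω hr (hmin r hr _)
  have hlin : Filter.Tendsto (fun r : ℝ => 2 * ‖σ‖ ^ 2 / ‖ω‖ * r)
      (nhdsWithin 0 (Set.Ioi 0)) (nhds 0) :=
    tendsto_nhdsWithin_of_tendsto_nhds ((continuous_const_mul _).tendsto' 0 0 (mul_zero _))
  exact squeeze_zero' (Filter.Eventually.of_forall fun _ => norm_nonneg _)
    (eventually_mem_nhdsWithin.mono hbound) hlin
end
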